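/- Let g be a Roman {2}-dominating function on the split graph G' (constructed from G as above) of minimum weight chosen so that the number of vertices of V^1 assigned value 2 is minimized. Then no vertex of V^1 is assigned the value 2 by g. -/

import Mathlib

open scoped Classical
open Finset

open scoped Classical in
noncomputable def nbrSum {V : Type*} [Fintype V] (G : SimpleGraph V) (f : V → ℕ) (v : V) : ℕ :=
  ∑ u ∈ Finset.univ.filter (fun u => G.Adj v u), f u

def IsR2DF {V : Type*} [Fintype V] (G : SimpleGraph V) (f : V → ℕ) : Prop :=
  (∀ v, f v ≤ 2) ∧ ∀ v, f v = 0 → 2 ≤ nbrSum G f v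

/-- Vertices of the split graph `G'`: a copy `V¹` of `V` (left), the original
vertices `V`, and one vertex for each edge of `G`. -/
abbrev SplitVert {V : Type*} (G : SimpleGraph V) : Type _ :=
  V ⊕ V ⊕ {e : Sym2 V // e ∈ G.edgeSet}

/-- One-directional relation generating the split graph: `V` is a clique, each copy
vertex `vᵢ'` is joined to `vᵢ`, and each edge-vertex is joined to its two endpoints. -/
def splitRel {V : Type*} (G : SimpleGraph V) : SplitVert G → SplitVert G → Prop
  | .inl a, .inr (.inl b) => a = b
  | .inr (.inl _), .inr (.inl _) => True
  | .inr (.inl a), .inr (.inr e) => a ∈ (e : Sym2 V)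
  | _, _ => False

/-- The split graph `G'` constructed from `G`. -/
def splitGraph {V : Type*} (G : SimpleGraph V) : SimpleGraph (SplitVert G) :=
  SimpleGraph.fromRel (splitRel G)

/-! The copy vertex `vᵢ'` is a pendant vertex of `G'` hanging from `vᵢ`; moving the label 2 from
a pendant vertex to its unique neighbour keeps a Roman {2}-dominating function dominating, does not
increase its weight, and removes one copy vertex labelled 2. -/

theorem splitGraph_adj_inl_iff {V : Type*} (G : SimpleGraph V) (i : V) (v : SplitVert G) :
    (splitGraph G).Adj (Sum.inl i) v ↔ v = Sum.inr (Sum.inl i) := by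
  rcases v with j | j | e <;> simp [splitGraph, splitRel, eq_comm]

section Update

variable {α : Type*} [DecidableEq α]

theorem sum_update_add_eq [Fintype α] (f : α → ℕ) (a : α) (c : ℕ) :
    ∑ x, Function.update f a c x + f a = ∑ x, f x + c := by
  rw [Finset.sum_update_of_mem (Finset.mem_univ a), ← Finset.sum_erase_add _ _ (Finset.mem_univ a),
    Finset.sdiff_singleton_eq_erase]
  ring

theorem sum_update_update_le [Fintype α] (f : α → ℕ) {a b : α} (hab : a ≠ b) {c : ℕ}
    (hc : c ≤ f a) : ∑ x, Function.update (Function.update f a 0) b c x ≤ ∑ x, f x := by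
  have h₁ := sum_update_add_eq f a 0
  have h₂ := sum_update_add_eq (Function.update f a 0) b c
  rw [Function.update_of_ne hab.symm] at h₂
  omega

theorem card_filter_update_lt [Fintype α] {β : Type*} [DecidableEq β] (f : α → β) {i : α}
    {c d : β} (hi : f i = d) (hc : c ≠ d) :
    #{j | Function.update f i c j = d} < #{j | f j = d} := by
  refine Finset.card_lt_card (Finset.ssubset_iff_of_subset ?_ |>.mpr ⟨i, by simpa, by simpa⟩)
  intro j
  by_cases hj : j = i
  · subst hj; simp [hc]
  · simp [Function.update_of_ne hj]

end Update

theorem IsR2DF.update_pendant {W : Type*} [Fintype W] [DecidableEq W] {H : SimpleGraph W} {f : W → ℕ}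
    (hf : IsR2DF H f) {a b : W} (hab : H.Adj a b) (hpendant : ∀ v, H.Adj a v → v = b) :
    IsR2DF H (Function.update (Function.update f a 0) b 2) := by
  set f' := Function.update (Function.update f a 0) b 2
  have hf'b : f' b = 2 := Function.update_self ..
  have hf'_of_ne : ∀ v, v ≠ a → v ≠ b → f' v = f v := fun v ha hb => by
    simp [f', Function.update_of_ne ha, Function.update_of_ne hb]
  have hle : ∀ v, v ≠ a → f v ≤ f' v := fun v ha => by
    by_cases hb : v = b
    · subst hb; exact hf'b ▸ hf.1 v
    · exact (hf'_of_ne v ha hb).ge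
  refine ⟨fun v => ?_, fun v hv => ?_⟩
  · simp only [f', Function.update_apply]
    split_ifs <;> first | omega | exact hf.1 v
  have hvb : v ≠ b := fun h => by simp [h, hf'b] at hv
  by_cases hva : v = a
  · subst hva
    calc 2 = f' b := hf'b.symm
      _ ≤ nbrSum H f' v := Finset.single_le_sum (fun _ _ => Nat.zero_le _) (by simpa using hab)
  -- `a` is adjacent only to `b`, and `f' b ≠ 0`, so `v` loses no neighbour weight
  have hva' : ∀ u, H.Adj v u → u ≠ a := fun u hu hua =>
    hvb (hpendant v (hua ▸ hu.symm))
  calc 2 ≤ nbrSum H f v := hf.2 v (hf'_of_ne v hva hvb ▸ hv)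
    _ ≤ nbrSum H f' v := Finset.sum_le_sum fun u hu => hle u (hva' u (by simpa using hu))

theorem stmt_4 {V : Type*} [Fintype V] (G : SimpleGraph V) (g : SplitVert G → ℕ)
    (hg : IsR2DF (splitGraph G) g)
    (hmin : ∀ g' : SplitVert G → ℕ, IsR2DF (splitGraph G) g' → ∑ x, g x ≤ ∑ x, g' x)
    (hcount : ∀ g' : SplitVert G → ℕ, IsR2DF (splitGraph G) g' → ∑ x, g' x = ∑ x, g x →
      (Finset.univ.filter (fun i : V => g (Sum.inl i) = 2)).card ≤
        (Finset.univ.filter (fun i : V => g' (Sum.inl i) = 2)).card) :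
    ∀ i : V, g (Sum.inl i) ≠ 2 := by
  intro i hi
  set g' := Function.update (Function.update g (Sum.inl i) 0) (Sum.inr (Sum.inl i)) 2
  have hadj := (splitGraph_adj_inl_iff G i _).mpr rfl
  have hR : IsR2DF (splitGraph G) g' :=
    hg.update_pendant hadj fun v => (splitGraph_adj_inl_iff G i v).mp
  have hweight : ∑ x, g' x = ∑ x, g x :=
    le_antisymm (sum_update_update_le g hadj.ne hi.ge) (hmin g' hR)
  have hcopies : (fun j : V => g' (Sum.inl j)) = Function.update (fun j => g (Sum.inl j)) i 0 := by
    rw [Function.update_comp_eq_of_forall_ne' _ _ fun _ => Sum.inl_ne_inr,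
      Function.update_comp_eq_of_injective' _ Sum.inl_injective]
  have hlt := card_filter_update_lt (fun j => g (Sum.inl j)) hi (c := 0) (by decide)
  rw [← hcopies] at hlt
  exact absurd (hcount g' hR hweight) (not_le.mpr hlt)
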